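/- arXiv:2210.07398 — 3 statements merged into one kernel-verified Lean document; each statement's English description precedes it below -/
import Mathlib

section
/- Suppose 0 < ε² < a² and ε > √(a²-ε²) (equivalently ε > |a|/√2). Let t₋ = ln((√(a²-ε²)+ε)/(ε-√(a²-ε²))). Then the solution x_{α₋}(t) = ((ε sinh t - √(a²-ε²) cosh t)/a, (ε cosh t - √(a²-ε²) sinh t)/a, -(√(a²-ε²) sinh t - ε cosh t + ε)/a) satisfies x_{α₋}(0) = P = (-√(a²-ε²)/a, ε/a, 0) and x_{α₋}(t₋) = Q = (√(a²-ε²)/a, ε/a, 0). -/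
/-- The solution `x_{α₋}` starting at `P` reaches `Q` at time
`tm = ln((√(a²-ε²)+ε)/(ε-√(a²-ε²)))`. -/
theorem stmt_9 (a ε : ℝ) (ha : a ≠ 0) (h0 : 0 < ε ^ 2) (hεa : ε ^ 2 < a ^ 2)
    (hε : Real.sqrt (a ^ 2 - ε ^ 2) < ε) :
    let s := Real.sqrt (a ^ 2 - ε ^ 2)
    let tm := Real.log ((s + ε) / (ε - s))
    let γ : ℝ → ℝ × ℝ × ℝ := fun t =>
      ((ε * Real.sinh t - s * Real.cosh t) / a,
       (ε * Real.cosh t - s * Real.sinh t) / a,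
       -((s * Real.sinh t - ε * Real.cosh t + ε) / a))
    γ 0 = (-s / a, ε / a, 0) ∧ γ tm = (s / a, ε / a, 0) := by
  intro s tm γ
  have hs0 : 0 ≤ s := Real.sqrt_nonneg _
  have hs2 : s ^ 2 = a ^ 2 - ε ^ 2 := Real.sq_sqrt (by nlinarith)
  have hεs : 0 < ε - s := by linarith [hε]
  have hsum : 0 < s + ε := by linarith
  have hr : 0 < (s + ε) / (ε - s) := div_pos hsum hεs
  have hsh : Real.sinh tm = ((s + ε) / (ε - s) - ((s + ε) / (ε - s))⁻¹) / 2 :=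
    Real.sinh_log hr
  have hch : Real.cosh tm = ((s + ε) / (ε - s) + ((s + ε) / (ε - s))⁻¹) / 2 :=
    Real.cosh_log hr
  have hne : ε - s ≠ 0 := ne_of_gt hεs
  have hne2 : s + ε ≠ 0 := ne_of_gt hsum
  constructor
  · simp only [γ, Real.sinh_zero, Real.cosh_zero]
    norm_num
  · simp only [γ, hsh, hch, Prod.mk.injEq]
    refine ⟨?_, ?_, ?_⟩ <;>
    · field_simp
      nlinarith [hs2, sq_nonneg s, sq_nonneg ε, sq_nonneg (ε-s), sq_nonneg (ε+s)]
end

section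
/- Suppose 0 < ε and ε² < a². Let t₊ = 2 arctan(√(a²-ε²)/ε). Then the solution x_{α₊}(t) = ((ε sin t - √(a²-ε²) cos t)/a, (√(a²-ε²) sin t + ε cos t)/a, (-√(a²-ε²) sin t - ε cos t + ε)/a) satisfies x_{α₊}(0) = P = (-√(a²-ε²)/a, ε/a, 0) and x_{α₊}(t₊) = Q = (√(a²-ε²)/a, ε/a, 0). -/
/-!
The plane part of `γ t` is `(-s, ε) / a` rotated by the angle `t`, and the third coordinate is
`ε / a` minus the second. By the half-angle formulas, `t = 2 arctan (s / ε)` has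
`sin t = 2sε / (s² + ε²)` and `cos t = (ε² - s²) / (s² + ε²)`, and the rotation by this angle maps
`(-s, ε)` to `(s, ε)`.
-/

namespace Real

theorem sin_two_mul_arctan (x : ℝ) : sin (2 * arctan x) = 2 * x / (1 + x ^ 2) := by
  have hsq : √(1 + x ^ 2) ^ 2 = 1 + x ^ 2 := sq_sqrt (by positivity)
  rw [sin_two_mul, sin_arctan, cos_arctan, mul_assoc, div_mul_div_comm, mul_one, ← sq, hsq,
    mul_div_assoc]

theorem cos_two_mul_arctan (x : ℝ) : cos (2 * arctan x) = (1 - x ^ 2) / (1 + x ^ 2) := by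
  have hsq : √(1 + x ^ 2) ^ 2 = 1 + x ^ 2 := sq_sqrt (by positivity)
  rw [cos_two_mul, cos_arctan, div_pow, one_pow, hsq]
  field_simp
  ring

theorem mul_sin_sub_mul_cos_two_mul_arctan_div (s ε : ℝ) (hε : ε ≠ 0) :
    ε * sin (2 * arctan (s / ε)) - s * cos (2 * arctan (s / ε)) = s := by
  rw [sin_two_mul_arctan, cos_two_mul_arctan]
  field_simp
  ring

theorem mul_sin_add_mul_cos_two_mul_arctan_div (s ε : ℝ) (hε : ε ≠ 0) :
    s * sin (2 * arctan (s / ε)) + ε * cos (2 * arctan (s / ε)) = ε := by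
  rw [sin_two_mul_arctan, cos_two_mul_arctan]
  field_simp
  ring

end Real

theorem stmt_10_general (a ε : ℝ) (hε : 0 < ε) :
    let s := Real.sqrt (a ^ 2 - ε ^ 2)
    let tp := 2 * Real.arctan (s / ε)
    let γ : ℝ → ℝ × ℝ × ℝ := fun t =>
      ((ε * Real.sin t - s * Real.cos t) / a,
       (s * Real.sin t + ε * Real.cos t) / a,
       (-s * Real.sin t - ε * Real.cos t + ε) / a)
    γ 0 = (-s / a, ε / a, 0) ∧ γ tp = (s / a, ε / a, 0) := by
  intro s tp γ
  have h₁ : ε * Real.sin tp - s * Real.cos tp = s :=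
    Real.mul_sin_sub_mul_cos_two_mul_arctan_div s ε hε.ne'
  have h₂ : s * Real.sin tp + ε * Real.cos tp = ε :=
    Real.mul_sin_add_mul_cos_two_mul_arctan_div s ε hε.ne'
  refine ⟨by simp [γ, neg_div], ?_⟩
  simp only [γ, Prod.mk.injEq]
  refine ⟨by rw [h₁], by rw [h₂], ?_⟩
  rw [show -s * Real.sin tp - ε * Real.cos tp + ε = 0 by linear_combination -h₂, zero_div]

/-- The solution `x_{α₊}` starting at `P` reaches `Q` at time
`tp = 2 arctan(√(a²-ε²)/ε)`. -/
theorem stmt_10 (a ε : ℝ) (ha : a ≠ 0) (hε : 0 < ε) (hεa : ε ^ 2 < a ^ 2) :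
    let s := Real.sqrt (a ^ 2 - ε ^ 2)
    let tp := 2 * Real.arctan (s / ε)
    let γ : ℝ → ℝ × ℝ × ℝ := fun t =>
      ((ε * Real.sin t - s * Real.cos t) / a,
       (s * Real.sin t + ε * Real.cos t) / a,
       (-s * Real.sin t - ε * Real.cos t + ε) / a)
    γ 0 = (-s / a, ε / a, 0) ∧ γ tp = (s / a, ε / a, 0) :=
  stmt_10_general a ε hε
end

section
/- Assume ε² < a². The inequality -|a| < ε < -|a|/√2 holds if and only if the quantity (√(a²-ε²)+ε)/(ε-√(a²-ε²)) lies strictly between 0 and 1 (so that t₋ = ln((√(a²-ε²)+ε)/(ε-√(a²-ε²))) is negative). -/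
/-- `-|a| < ε < -|a|/√2` holds iff `(√(a²-ε²)+ε)/(ε-√(a²-ε²))` lies strictly
between `0` and `1` (so that `t₋` is negative). -/
theorem stmt_13 (a ε : ℝ) (ha : a ≠ 0) (hεa : ε ^ 2 < a ^ 2) :
    (-|a| < ε ∧ ε < -(|a| / Real.sqrt 2)) ↔
    (0 < (Real.sqrt (a ^ 2 - ε ^ 2) + ε) / (ε - Real.sqrt (a ^ 2 - ε ^ 2)) ∧
     (Real.sqrt (a ^ 2 - ε ^ 2) + ε) / (ε - Real.sqrt (a ^ 2 - ε ^ 2)) < 1) := by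
  set s := Real.sqrt (a ^ 2 - ε ^ 2) with hsdef
  have hpos : 0 < a ^ 2 - ε ^ 2 := by linarith
  have hs : 0 < s := Real.sqrt_pos.mpr hpos
  have hs2 : s ^ 2 = a ^ 2 - ε ^ 2 := Real.sq_sqrt hpos.le
  have h2 : (Real.sqrt 2) ^ 2 = 2 := Real.sq_sqrt (by norm_num)
  have h2pos : (1 : ℝ) < Real.sqrt 2 := by nlinarith [Real.sqrt_nonneg 2]
  have habs : |a| ^ 2 = a ^ 2 := sq_abs a
  have habs0 : 0 < |a| := abs_pos.mpr ha
  have hlow : -|a| < ε := by nlinarith [abs_nonneg ε, sq_abs ε, neg_abs_le ε]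
  -- key equivalence: ε < -(|a|/√2) ↔ ε + s < 0
  have h2' : Real.sqrt 2 * Real.sqrt 2 = 2 := Real.mul_self_sqrt (by norm_num)
  have key : ε < -(|a| / Real.sqrt 2) ↔ ε + s < 0 := by
    rw [lt_neg, div_lt_iff₀ (by linarith : (0:ℝ) < Real.sqrt 2)]
    constructor
    · intro h
      have hε : ε < 0 := by nlinarith
      have ha2 : a ^ 2 < 2 * ε ^ 2 := by
        have hm := mul_self_lt_mul_self habs0.le h
        have heq : (-ε * Real.sqrt 2) * (-ε * Real.sqrt 2) = 2 * ε ^ 2 := by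
          rw [show (-ε * Real.sqrt 2) * (-ε * Real.sqrt 2)
              = (Real.sqrt 2 * Real.sqrt 2) * ε ^ 2 by ring, h2']
        nlinarith [sq_abs a]
      nlinarith [ha2, hs2]
    · intro h
      have hε : ε < 0 := by linarith
      have hss : s ^ 2 < ε ^ 2 := by nlinarith
      have ha2 : a ^ 2 < 2 * ε ^ 2 := by linarith
      have hsq : |a| ^ 2 < (-ε * Real.sqrt 2) ^ 2 := by
        rw [mul_pow, h2, habs]; nlinarith
      exact lt_of_pow_lt_pow_left₀ 2
        (mul_nonneg (by linarith) (Real.sqrt_nonneg 2)) hsq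
  constructor
  · rintro ⟨-, h⟩
    have hes : ε + s < 0 := key.mp h
    have hd : ε - s < 0 := by linarith
    constructor
    · exact div_pos_of_neg_of_neg (by linarith) hd
    · rw [div_lt_one_iff]
      right; right
      exact ⟨hd, by linarith⟩
  · rintro ⟨h1, h2'⟩
    have hd : ε - s ≠ 0 := by
      intro h; rw [h] at h1; simp at h1
    have hes : ε + s < 0 := by
      rcases lt_or_gt_of_ne hd with hd' | hd'
      · rcases div_pos_iff.mp h1 with ⟨_, hb⟩ | ⟨hn, _⟩
        · linarith
        · linarith
      · exfalso
        rw [div_lt_one hd'] at h2'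
        linarith
    exact ⟨hlow, key.mpr hes⟩
end
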